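/- Let U : (0,∞) → [0,∞) be a Borel function such that x ↦ x^r U(x) is integrable on (0,∞) for every r ∈ ℝ and such that ∫₀^∞ x·exp((2imπ/log 2) log x) U(x) dx equals 1 for m = 0 and equals 0 for every m ∈ ℤ \ {0}. Let f : (0,∞) → ℂ be continuous with sup_{x>0} |f(x)|/x < ∞ and f(2x) = 2f(x) for all x > 0. Then sup_{x>0} |f(x) − Σ_{k=−N}^{N} (1 − |k|/N) ν_k(f) φ_k(x)|/x → 0 as N → ∞, where φ_k(x) := x·exp((2ikπ/log 2) log x) and ν_k(f) := ∫₀^∞ exp(−(2ikπ/log 2) log x) U(x) f(x) dx. Consequently any such f lies in the closure, for the norm sup_{x>0}|·|/x, of the linear span of (φ_k)_{k∈ℤ}. -/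

import Mathlib

open MeasureTheory Real Set Filter Topology

noncomputable section

/-- The boundary eigenvalue `λ_k = 1 + 2ikπ/log 2`. -/
def lambdak (k : ℤ) : ℂ :=
  1 + Complex.I * ((2 * (k : ℝ) * Real.pi / Real.log 2 : ℝ) : ℂ)

/-- The adjoint boundary eigenfunction `φ_k(x) = x · exp((2ikπ/log 2) log x)`. -/
def phik (k : ℤ) (x : ℝ) : ℂ :=
  (x : ℂ) * Complex.exp (Complex.I * ((2 * (k : ℝ) * Real.pi / Real.log 2 : ℝ) : ℂ)
      * (Real.log x : ℂ))

/-- The boundary eigenfunction `U_k(x) = exp(-(2ikπ/log 2) log x) U(x)`. -/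
def Uk (U : ℝ → ℝ) (k : ℤ) (x : ℝ) : ℂ :=
  Complex.exp (-(Complex.I * ((2 * (k : ℝ) * Real.pi / Real.log 2 : ℝ) : ℂ))
      * (Real.log x : ℂ)) * (U x : ℂ)

/-- The linear form `ν_k(f) = ∫₀^∞ U_k(x) f(x) dx` (complex-valued `f`). -/
def nuk (U : ℝ → ℝ) (k : ℤ) (f : ℝ → ℂ) : ℂ :=
  ∫ x in Ioi (0:ℝ), Uk U k x * f x

/-!
Write `f x = x * G (log₂ x)` with `G` continuous on `ℝ/ℤ`, which the scaling `f (2x) = 2 f x`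
allows, and let `μ` be the image of `x U(x) dx` under `x ↦ log₂ x mod 1`. Then `φ_k` becomes the
character `e_k`, `ν_k(f)` becomes the `k`-th Fourier coefficient of `G` against `μ`, and the
hypothesis on `U` says that `μ` has the Fourier coefficients of Haar measure. This is all that
Fejér's theorem needs: the Fejér kernel `|∑_{j<N} e_j|² / N` is nonnegative and has `μ`-mass one,
so the Fejér operators are contractions of `C(ℝ/ℤ)`, and they converge to the identity on
trigonometric polynomials, which are dense.
-/

lemma sum_range_mul_sum_range_neg {R : Type*} [CommRing R] (E : ℤ → R)
    (hE : ∀ a b, E (a + b) = E a * E b) (N : ℕ) :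
    (∑ j ∈ Finset.range N, E j) * ∑ j ∈ Finset.range N, E (-j) =
      ∑ k ∈ Finset.Icc (-(N : ℤ)) N, ((N - |k| : ℤ) : R) * E k := by
  induction N with
  | zero => simp
  | succ N ih =>
    have hleft : (∑ j ∈ Finset.range N, E j) * E (-N) = ∑ k ∈ Finset.Icc (-(N : ℤ)) (-1), E k := by
      rw [Finset.sum_mul]
      refine Finset.sum_nbij' (fun j => (j : ℤ) - N) (fun k => (k + N).toNat) ?_ ?_ ?_ ?_ ?_ <;>
        intro a ha <;> simp at ha ⊢ <;> first | omega | (rw [← hE]; ring_nf)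
    have hright : E N * ∑ j ∈ Finset.range N, E (-j) = ∑ k ∈ Finset.Icc (1 : ℤ) N, E k := by
      rw [Finset.mul_sum]
      refine Finset.sum_nbij' (fun j => (N : ℤ) - j) (fun k => (N - k).toNat) ?_ ?_ ?_ ?_ ?_ <;>
        intro a ha <;> simp at ha ⊢ <;> first | omega | (rw [← hE]; ring_nf)
    have hsplit : ∑ k ∈ Finset.Icc (-(N : ℤ)) N, E k =
        ∑ k ∈ Finset.Icc (-(N : ℤ)) (-1), E k + E 0 + ∑ k ∈ Finset.Icc (1 : ℤ) N, E k := by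
      have hIcc : Finset.Icc (-(N : ℤ)) N =
          Finset.Icc (-(N : ℤ)) (-1) ∪ insert 0 (Finset.Icc (1 : ℤ) N) := by
        ext; simp; omega
      rw [hIcc, Finset.sum_union (Finset.disjoint_left.2 fun a ha hb => by simp at ha hb; omega),
        Finset.sum_insert (by simp), add_assoc]
    have hgrow : ∑ k ∈ Finset.Icc (-((N + 1 : ℕ) : ℤ)) (N + 1 : ℕ),
          (((N + 1 : ℕ) - |k| : ℤ) : R) * E k =
        ∑ k ∈ Finset.Icc (-(N : ℤ)) N, ((N - |k| : ℤ) : R) * E k +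
          ∑ k ∈ Finset.Icc (-(N : ℤ)) N, E k := by
      have hsub : Finset.Icc (-(N : ℤ)) N ⊆ Finset.Icc (-((N + 1 : ℕ) : ℤ)) (N + 1 : ℕ) :=
        Finset.Icc_subset_Icc (by push_cast; omega) (by push_cast; omega)
      rw [← Finset.sum_add_distrib, ← Finset.sum_subset hsub]
      · refine Finset.sum_congr rfl fun k _ => ?_
        push_cast
        ring
      · intro k hk hk'
        simp only [Finset.mem_Icc] at hk hk'
        rw [show ((N + 1 : ℕ) : ℤ) - |k| = 0 by rw [abs_eq_max_neg]; omega, Int.cast_zero, zero_mul]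
    rw [hgrow, ← ih, hsplit, ← hleft, ← hright, Finset.sum_range_succ, Finset.sum_range_succ]
    have h0 : E N * E (-N) = E 0 := by rw [← hE, add_neg_cancel]
    linear_combination h0

lemma integral_map_withDensity_ofReal {α β E : Type*} [MeasurableSpace α] [MeasurableSpace β]
    [NormedAddCommGroup E] [NormedSpace ℝ E] {ν : Measure α} {ρ : α → ℝ} {θ : α → β}
    (hρ : AEMeasurable ρ ν) (hρ0 : 0 ≤ᵐ[ν] ρ) (hθ : Measurable θ) {φ : β → E}
    (hφ : AEStronglyMeasurable φ ((ν.withDensity fun x => ENNReal.ofReal (ρ x)).map θ)) :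
    ∫ y, φ y ∂(ν.withDensity fun x => ENNReal.ofReal (ρ x)).map θ = ∫ x, ρ x • φ (θ x) ∂ν := by
  rw [integral_map hθ.aemeasurable hφ, integral_withDensity_eq_integral_toReal_smul₀
    hρ.ennreal_ofReal (ae_of_all _ fun _ => ENNReal.ofReal_lt_top)]
  exact integral_congr_ae (hρ0.mono fun x hx => by simp only [ENNReal.toReal_ofReal hx])

section Fejer

variable {T : ℝ}

def fejerKernel (N : ℕ) (u : AddCircle T) : ℝ :=
  ‖∑ j ∈ Finset.range N, fourier (j : ℤ) u‖ ^ 2 / N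

lemma fejerKernel_nonneg (N : ℕ) (u : AddCircle T) : 0 ≤ fejerKernel N u := by
  unfold fejerKernel; positivity

@[fun_prop]
lemma continuous_fejerKernel (N : ℕ) : Continuous (fejerKernel (T := T) N) := by
  unfold fejerKernel; fun_prop

lemma fejerKernel_eq_sum_fourier {N : ℕ} (hN : N ≠ 0) (u : AddCircle T) :
    (fejerKernel N u : ℂ) =
      ∑ k ∈ Finset.Icc (-(N : ℤ)) N, (((1 : ℝ) - (|k| : ℝ) / (N : ℝ) : ℝ) : ℂ) * fourier k u := by
  have hsq : ((‖∑ j ∈ Finset.range N, fourier (j : ℤ) u‖ ^ 2 : ℝ) : ℂ) =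
      ∑ k ∈ Finset.Icc (-(N : ℤ)) N, ((N - |k| : ℤ) : ℂ) * fourier k u := by
    rw [← sum_range_mul_sum_range_neg (fourier · u) (fun _ _ => fourier_add) N]
    push_cast
    rw [← Complex.mul_conj', map_sum]
    simp only [fourier_neg]
  have hN' : (N : ℂ) ≠ 0 := Nat.cast_ne_zero.2 hN
  rw [fejerKernel, Complex.ofReal_div, hsq, Finset.sum_div]
  refine Finset.sum_congr rfl fun k _ => ?_
  push_cast
  rw [← Int.cast_abs, Complex.ofReal_intCast]
  field_simp

lemma fourier_apply_sub (k : ℤ) (t s : AddCircle T) :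
    fourier k (t - s) = fourier k t * fourier (-k) s := by
  simp [fourier_apply, sub_eq_add_neg, AddCircle.toCircle_add]

def HasHaarFourierCoeffs (μ : Measure (AddCircle T)) : Prop :=
  ∀ m : ℤ, ∫ s, fourier m s ∂μ = if m = 0 then 1 else 0

variable [Fact (0 < T)] (μ : Measure (AddCircle T)) [IsFiniteMeasure μ]

lemma integrable_of_continuous {E : Type*} [NormedAddCommGroup E] {G : AddCircle T → E}
    (hG : Continuous G) : Integrable G μ :=
  hG.integrable_of_hasCompactSupport (HasCompactSupport.of_compactSpace _)

def fejerSum (N : ℕ) : C(AddCircle T, ℂ) →ₗ[ℂ] C(AddCircle T, ℂ) where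
  toFun G := ∑ k ∈ Finset.Icc (-(N : ℤ)) N,
    ((((1 : ℝ) - (|k| : ℝ) / (N : ℝ) : ℝ) : ℂ) * ∫ s, fourier (-k) s * G s ∂μ) • fourier k
  map_add' G H := by
    simp only [← Finset.sum_add_distrib, ← add_smul, ← mul_add]
    refine Finset.sum_congr rfl fun k _ => ?_
    simp only [ContinuousMap.add_apply, mul_add]
    rw [integral_add (integrable_of_continuous μ (by fun_prop))
      (integrable_of_continuous μ (by fun_prop)), mul_add]
  map_smul' c G := by
    simp only [ContinuousMap.smul_apply, smul_eq_mul, mul_left_comm _ c, integral_const_mul,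
      Finset.smul_sum, smul_smul, RingHom.id_apply]

lemma fejerSum_apply (N : ℕ) (G : C(AddCircle T, ℂ)) (t : AddCircle T) :
    fejerSum μ N G t = ∑ k ∈ Finset.Icc (-(N : ℤ)) N,
      (((1 : ℝ) - (|k| : ℝ) / (N : ℝ) : ℝ) : ℂ) * (∫ s, fourier (-k) s * G s ∂μ) * fourier k t := by
  simp [fejerSum]

lemma fejerSum_apply_eq_integral {N : ℕ} (hN : N ≠ 0) (G : C(AddCircle T, ℂ)) (t : AddCircle T) :
    fejerSum μ N G t = ∫ s, G s * fejerKernel N (t - s) ∂μ := by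
  simp only [fejerSum_apply, fejerKernel_eq_sum_fourier hN, Finset.mul_sum]
  rw [integral_finsetSum _ fun k _ => integrable_of_continuous μ (by fun_prop)]
  refine Finset.sum_congr rfl fun k _ => ?_
  have hmul : ∀ s, G s * ((((1 : ℝ) - (|k| : ℝ) / (N : ℝ) : ℝ) : ℂ) * fourier k (t - s)) =
      ((((1 : ℝ) - (|k| : ℝ) / (N : ℝ) : ℝ) : ℂ) * fourier k t) * (fourier (-k) s * G s) := by
    intro s
    rw [fourier_apply_sub]
    ring
  simp_rw [hmul, integral_const_mul]
  ring

variable {μ}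

lemma fejerSum_fourier (hμ : HasHaarFourierCoeffs μ) (N : ℕ) (m : ℤ) :
    fejerSum μ N (fourier m) = if m ∈ Finset.Icc (-(N : ℤ)) N then
      (((1 : ℝ) - (|m| : ℝ) / (N : ℝ) : ℝ) : ℂ) • fourier m else 0 := by
  have horth : ∀ k, ∫ s, fourier (-k) s * fourier m s ∂μ = if m = k then 1 else 0 := by
    intro k
    simp_rw [← fourier_add]
    rw [hμ (-k + m)]
    simp only [neg_add_eq_zero, eq_comm]
  simp only [fejerSum, LinearMap.coe_mk, AddHom.coe_mk, horth, mul_ite, mul_one, mul_zero,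
    ite_smul, zero_smul, Finset.sum_ite_eq]

lemma tendsto_fejerSum_fourier (hμ : HasHaarFourierCoeffs μ) (m : ℤ) :
    Tendsto (fun N => fejerSum μ N (fourier m)) atTop (𝓝 (fourier m)) := by
  have hev : ∀ᶠ N : ℕ in atTop,
      (((1 : ℝ) - (|m| : ℝ) / (N : ℝ) : ℝ) : ℂ) • fourier m = fejerSum μ N (fourier m) := by
    filter_upwards [eventually_ge_atTop m.natAbs] with N hN
    rw [fejerSum_fourier hμ, if_pos (Finset.mem_Icc.2 ⟨by omega, by omega⟩)]
  have hweight : Tendsto (fun N : ℕ => (((1 : ℝ) - (|m| : ℝ) / (N : ℝ) : ℝ) : ℂ)) atTop (𝓝 1) := by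
    have h := (tendsto_const_div_atTop_nhds_zero_nat (|m| : ℝ)).const_sub 1
    rw [sub_zero] at h
    exact_mod_cast (Complex.continuous_ofReal.tendsto 1).comp h
  simpa using (hweight.smul_const (fourier m)).congr' hev

lemma integral_fejerKernel (hμ : HasHaarFourierCoeffs μ) {N : ℕ} (hN : N ≠ 0) (t : AddCircle T) :
    ∫ s, fejerKernel N (t - s) ∂μ = 1 := by
  have h := fejerSum_apply_eq_integral μ hN (fourier 0) t
  rw [fejerSum_fourier hμ, if_pos (by simp)] at h
  simp only [fourier_zero, Int.cast_zero, abs_zero, zero_div, sub_zero, Complex.ofReal_one,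
    one_smul, one_mul, integral_complex_ofReal] at h
  exact_mod_cast h.symm

lemma norm_fejerSum_le (hμ : HasHaarFourierCoeffs μ) {N : ℕ} (hN : N ≠ 0) (G : C(AddCircle T, ℂ)) :
    ‖fejerSum μ N G‖ ≤ ‖G‖ := by
  refine (ContinuousMap.norm_le _ (norm_nonneg G)).2 fun t => ?_
  have hbound : ∀ s, ‖G s * fejerKernel N (t - s)‖ ≤ ‖G‖ * fejerKernel N (t - s) := fun s => by
    rw [norm_mul, Complex.norm_real, norm_of_nonneg (fejerKernel_nonneg N _)]
    exact mul_le_mul_of_nonneg_right (G.norm_coe_le_norm s) (fejerKernel_nonneg N _)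
  calc ‖fejerSum μ N G t‖ ≤ ∫ s, ‖G‖ * fejerKernel N (t - s) ∂μ := by
        rw [fejerSum_apply_eq_integral μ hN]
        exact norm_integral_le_of_norm_le
          (integrable_of_continuous μ (by fun_prop)) (ae_of_all _ hbound)
    _ = ‖G‖ := by rw [integral_const_mul, integral_fejerKernel hμ hN, mul_one]

lemma tendsto_fejerSum_of_mem_span (hμ : HasHaarFourierCoeffs μ) {P : C(AddCircle T, ℂ)}
    (hP : P ∈ Submodule.span ℂ (range fourier)) :
    Tendsto (fun N => fejerSum μ N P) atTop (𝓝 P) := by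
  induction hP using Submodule.span_induction with
  | mem _ h =>
    obtain ⟨m, rfl⟩ := h
    exact tendsto_fejerSum_fourier hμ m
  | zero => simp
  | add P Q _ _ hP hQ => simpa using hP.add hQ
  | smul c P _ hP => simpa using hP.const_smul c

theorem tendsto_fejerSum (hμ : HasHaarFourierCoeffs μ) (G : C(AddCircle T, ℂ)) :
    Tendsto (fun N => fejerSum μ N G) atTop (𝓝 G) := by
  refine Metric.tendsto_atTop.2 fun ε hε => ?_
  have hG : G ∈ closure (Submodule.span ℂ (range (@fourier T)) : Set C(AddCircle T, ℂ)) := by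
    rw [← Submodule.topologicalClosure_coe, span_fourier_closure_eq_top]
    trivial
  obtain ⟨P, hP, hGP⟩ := Metric.mem_closure_iff.1 hG (ε / 3) (by positivity)
  obtain ⟨N₀, hN₀⟩ :=
    Metric.tendsto_atTop.1 (tendsto_fejerSum_of_mem_span hμ hP) (ε / 3) (by positivity)
  refine ⟨max N₀ 1, fun N hN => ?_⟩
  have hN0 : N ≠ 0 := by have := le_of_max_le_right hN; omega
  calc dist (fejerSum μ N G) G
      ≤ ‖fejerSum μ N (G - P)‖ + dist (fejerSum μ N P) P + dist G P := by
        rw [map_sub, ← dist_eq_norm, dist_comm G P]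
        exact dist_triangle4 _ _ _ _
    _ < ε / 3 + ε / 3 + ε / 3 := by
        gcongr
        · exact (norm_fejerSum_le hμ hN0 _).trans_lt (dist_eq_norm G P ▸ hGP)
        · exact hN₀ N (le_of_max_le_left hN)
    _ = ε := by ring

end Fejer

lemma exists_continuousMap_addCircle_of_mul_eq {b : ℝ} (hb : 1 < b) {f : ℝ → ℂ}
    (hfc : ContinuousOn f (Ioi 0)) (hf : ∀ x > 0, f (b * x) = b * f x) :
    ∃ G : C(AddCircle (1 : ℝ), ℂ), ∀ x > 0, f x = x * G (logb b x) := by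
  have hb0 : 0 < b := one_pos.trans hb
  set g : ℝ → ℂ := fun t => f (b ^ t) / (b ^ t : ℝ)
  have hper : Function.Periodic g 1 := fun t => by
    have hne : ((b ^ t : ℝ) : ℂ) ≠ 0 := by exact_mod_cast (rpow_pos_of_pos hb0 t).ne'
    have hb' : (b : ℂ) ≠ 0 := by exact_mod_cast hb0.ne'
    simp only [g, rpow_add_one hb0.ne', mul_comm _ b, hf _ (rpow_pos_of_pos hb0 t),
      Complex.ofReal_mul]
    field_simp
  have hpow : Continuous (b ^ · : ℝ → ℝ) := continuous_const_rpow hb0.ne'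
  have hcont : Continuous g :=
    (hfc.comp_continuous hpow fun t => rpow_pos_of_pos hb0 t).div (by fun_prop)
      fun t => by exact_mod_cast (rpow_pos_of_pos hb0 t).ne'
  refine ⟨⟨hper.lift, (QuotientAddGroup.isQuotientMap_mk _).continuous_iff.2 hcont⟩,
    fun x hx => ?_⟩
  have hx' : (x : ℂ) ≠ 0 := by exact_mod_cast hx.ne'
  change f x = x * g (logb b x)
  simp only [g, rpow_logb hb0 hb.ne' hx]
  field_simp

def logCircleMeasure (ρ : ℝ → ℝ) : Measure (AddCircle (1 : ℝ)) :=
  ((volume.restrict (Ioi 0)).withDensity fun x => ENNReal.ofReal (ρ x)).map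
    fun x => (logb 2 x : AddCircle (1 : ℝ))

section LogCircleMeasure

variable {ρ : ℝ → ℝ}

lemma isFiniteMeasure_logCircleMeasure (hρ : IntegrableOn ρ (Ioi 0)) :
    IsFiniteMeasure (logCircleMeasure ρ) := by
  have := isFiniteMeasure_withDensity_ofReal hρ.2
  unfold logCircleMeasure
  infer_instance

lemma integral_logCircleMeasure (hρ : IntegrableOn ρ (Ioi 0)) (hρ0 : ∀ x > 0, 0 ≤ ρ x)
    {φ : AddCircle (1 : ℝ) → ℂ} (hφ : Continuous φ) :
    ∫ s, φ s ∂logCircleMeasure ρ = ∫ x in Ioi 0, ρ x * φ (logb 2 x) := by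
  have hθ : Measurable fun x : ℝ => (logb 2 x : AddCircle (1 : ℝ)) :=
    AddCircle.measurable_mk'.comp (measurable_log.div_const _)
  rw [logCircleMeasure, integral_map_withDensity_ofReal hρ.aemeasurable
    ((ae_restrict_mem measurableSet_Ioi).mono hρ0) hθ hφ.aestronglyMeasurable]
  rfl

end LogCircleMeasure

lemma phik_eq_mul_fourier (k : ℤ) (x : ℝ) :
    phik k x = x * fourier k (logb 2 x : AddCircle (1 : ℝ)) := by
  rw [phik, fourier_coe_apply, logb]
  congr 2
  push_cast
  ring

lemma Uk_eq_mul_fourier (U : ℝ → ℝ) (k : ℤ) (x : ℝ) :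
    Uk U k x = U x * fourier (-k) (logb 2 x : AddCircle (1 : ℝ)) := by
  rw [Uk, fourier_coe_apply, logb, mul_comm]
  congr 2
  push_cast
  ring

lemma hasHaarFourierCoeffs_logCircleMeasure {U : ℝ → ℝ} (hU0 : ∀ x > 0, 0 ≤ U x)
    (hU : IntegrableOn (fun x => x * U x) (Ioi 0))
    (horth : ∀ m : ℤ, (∫ x in Ioi (0 : ℝ), phik m x * (U x : ℂ)) = if m = 0 then 1 else 0) :
    HasHaarFourierCoeffs (logCircleMeasure fun x => x * U x) := fun m => by
  rw [integral_logCircleMeasure hU (fun x hx => mul_nonneg hx.le (hU0 x hx)) (by fun_prop),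
    ← horth m]
  refine setIntegral_congr_fun measurableSet_Ioi fun x _ => ?_
  rw [phik_eq_mul_fourier]
  push_cast
  ring

lemma nuk_eq_integral_logCircleMeasure {U : ℝ → ℝ} (hU0 : ∀ x > 0, 0 ≤ U x)
    (hU : IntegrableOn (fun x => x * U x) (Ioi 0)) {f : ℝ → ℂ} {G : C(AddCircle (1 : ℝ), ℂ)}
    (hG : ∀ x > 0, f x = x * G (logb 2 x)) (k : ℤ) :
    nuk U k f = ∫ s, fourier (-k) s * G s ∂logCircleMeasure fun x => x * U x := by
  rw [integral_logCircleMeasure hU (fun x hx => mul_nonneg hx.le (hU0 x hx)) (by fun_prop), nuk]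
  refine setIntegral_congr_fun measurableSet_Ioi fun x hx => ?_
  rw [Uk_eq_mul_fourier, hG x hx]
  push_cast
  ring

lemma sum_mul_phik_mem_span (s : Finset ℤ) (c : ℤ → ℂ) :
    (fun x => ∑ k ∈ s, c k * phik k x) ∈ Submodule.span ℂ (Set.range fun k : ℤ => phik k) := by
  have hsum : (fun x => ∑ k ∈ s, c k * phik k x) = ∑ k ∈ s, c k • phik k := by
    ext x
    simp [Finset.sum_apply]
  rw [hsum]
  exact Submodule.sum_mem _ fun k _ => Submodule.smul_mem _ _ (Submodule.subset_span ⟨k, rfl⟩)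

theorem stmt10_general (U : ℝ → ℝ) (hU0 : ∀ x > 0, 0 ≤ U x)
    (hUint : ∀ r : ℝ, IntegrableOn (fun x => x ^ r * U x) (Ioi 0))
    (horth : ∀ m : ℤ, (∫ x in Ioi (0:ℝ), phik m x * (U x : ℂ))
      = if m = 0 then 1 else 0)
    (f : ℝ → ℂ) (hfc : ContinuousOn f (Ioi 0))
    (hf2 : ∀ x > 0, f (2 * x) = 2 * f x) :
    (∀ ε > 0, ∃ N₀ : ℕ, ∀ N ≥ N₀, ∀ x > 0,
      ‖f x - ∑ k ∈ Finset.Icc (-(N : ℤ)) (N : ℤ),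
        (((1 : ℝ) - (|k| : ℝ) / (N : ℝ) : ℝ) : ℂ) * nuk U k f * phik k x‖ ≤ ε * x) ∧
    (∀ ε > 0, ∃ g ∈ Submodule.span ℂ (Set.range fun k : ℤ => phik k),
      ∀ x > 0, ‖f x - g x‖ ≤ ε * x) := by
  obtain ⟨G, hG⟩ := exists_continuousMap_addCircle_of_mul_eq one_lt_two hfc
    fun x hx => by exact_mod_cast hf2 x hx
  have hU : IntegrableOn (fun x => x * U x) (Ioi 0) := by simpa using hUint 1
  set μ := logCircleMeasure fun x => x * U x
  have := isFiniteMeasure_logCircleMeasure hU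
  have hfejer : ∀ N : ℕ, ∀ x > 0, f x - ∑ k ∈ Finset.Icc (-(N : ℤ)) (N : ℤ),
      (((1 : ℝ) - (|k| : ℝ) / (N : ℝ) : ℝ) : ℂ) * nuk U k f * phik k x =
        x * (G (logb 2 x) - fejerSum μ N G (logb 2 x)) := by
    intro N x hx
    rw [fejerSum_apply, hG x hx, mul_sub, Finset.mul_sum]
    congr 1
    refine Finset.sum_congr rfl fun k _ => ?_
    rw [nuk_eq_integral_logCircleMeasure hU0 hU hG, phik_eq_mul_fourier]
    ring
  have hconv : ∀ ε > 0, ∃ N₀ : ℕ, ∀ N ≥ N₀, ∀ x > 0, ‖f x - ∑ k ∈ Finset.Icc (-(N : ℤ)) (N : ℤ),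
      (((1 : ℝ) - (|k| : ℝ) / (N : ℝ) : ℝ) : ℂ) * nuk U k f * phik k x‖ ≤ ε * x := by
    intro ε hε
    have hunif := ContinuousMap.tendsto_iff_tendstoUniformly.1
      (tendsto_fejerSum (hasHaarFourierCoeffs_logCircleMeasure hU0 hU horth) G)
    obtain ⟨N₀, hN₀⟩ := eventually_atTop.1 (Metric.tendstoUniformly_iff.1 hunif ε hε)
    refine ⟨N₀, fun N hN x hx => ?_⟩
    rw [hfejer N x hx, norm_mul, Complex.norm_real, norm_of_nonneg hx.le, mul_comm ε,
      ← dist_eq_norm]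
    exact mul_le_mul_of_nonneg_left (hN₀ N hN _).le hx.le
  refine ⟨hconv, fun ε hε => ?_⟩
  obtain ⟨N, hN⟩ := hconv ε hε
  exact ⟨_, sum_mul_phik_mem_span _ _, hN N le_rfl⟩

/-- Fejér-type approximation: if `f` is continuous, `‖f‖_Ḃ < ∞` and `f(2x) = 2f(x)`, then the
Fejér sums `Σ (1-|k|/N) ν_k(f) φ_k` converge to `f` in the norm `sup |·|/x`; consequently `f`
lies in the closure of the span of `(φ_k)`. -/
theorem stmt10 (U : ℝ → ℝ) (hU0 : ∀ x > 0, 0 ≤ U x) (hUmeas : Measurable U)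
    (hUint : ∀ r : ℝ, IntegrableOn (fun x => x ^ r * U x) (Ioi 0))
    (horth : ∀ m : ℤ, (∫ x in Ioi (0:ℝ), phik m x * (U x : ℂ))
      = if m = 0 then 1 else 0)
    (f : ℝ → ℂ) (hfc : ContinuousOn f (Ioi 0))
    (hfb : ∃ C, ∀ x > 0, ‖f x‖ ≤ C * x)
    (hf2 : ∀ x > 0, f (2 * x) = 2 * f x) :
    (∀ ε > 0, ∃ N₀ : ℕ, ∀ N ≥ N₀, ∀ x > 0,
      ‖f x - ∑ k ∈ Finset.Icc (-(N : ℤ)) (N : ℤ),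
        (((1 : ℝ) - (|k| : ℝ) / (N : ℝ) : ℝ) : ℂ) * nuk U k f * phik k x‖ ≤ ε * x) ∧
    (∀ ε > 0, ∃ g ∈ Submodule.span ℂ (Set.range fun k : ℤ => phik k),
      ∀ x > 0, ‖f x - g x‖ ≤ ε * x) :=
  stmt10_general U hU0 hUint horth f hfc hf2
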